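/- arXiv:2509.26367 — 3 statements merged into one kernel-verified Lean document; each statement's English description precedes it below -/
import Mathlib

section
/- For every positive integer j, the integral ∫₀^π cos(2jx) · ln(sin x) dx equals -π/(2j). -/
/-!
Differentiating `sin (2 j x) * log (sin x)` on `(0, π)` gives
`2 j cos (2 j x) log (sin x) + sin (2 j x) cot x`. Since
`sin (2 j x) = sin x * ∑_{k<j} 2 cos ((2k+1) x)`, that product equals
`(∑_{k<j} 2 cos ((2k+1) x)) * (sin x * log (sin x))`: it is continuous on `[0, π]` and vanishes at
both ends, so its derivative integrates to `0`. The cotangent term is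
`∑_{k<j} (cos (2(k+1) x) + cos (2k x))`, whose integral over `[0, π]` is `π`, all of it coming from
the constant term `k = 0`.
-/

open Real intervalIntegral Finset

theorem sin_two_mul_nat_mul_eq_sin_mul_sum (n : ℕ) (x : ℝ) :
    sin (2 * n * x) = sin x * ∑ k ∈ range n, 2 * cos ((2 * k + 1) * x) := by
  induction n with
  | zero => simp
  | succ n ih =>
    have telescope :
        sin (2 * (n + 1) * x) - sin (2 * n * x) = sin x * (2 * cos ((2 * n + 1) * x)) := by
      rw [show 2 * ((n : ℝ) + 1) * x = (2 * n + 1) * x + x by ring,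
        show 2 * (n : ℝ) * x = (2 * n + 1) * x - x by ring, sin_add, sin_sub]
      ring
    rw [Nat.cast_succ, sum_range_succ, mul_add (sin x), ← ih, ← telescope]
    ring

theorem continuous_sin_two_nat_mul_mul_log_sin (n : ℕ) :
    Continuous fun x ↦ sin (2 * n * x) * log (sin x) := by
  have h : (fun x ↦ sin (2 * n * x) * log (sin x))
      = fun x ↦ (∑ k ∈ range n, 2 * cos ((2 * k + 1) * x)) * (sin x * log (sin x)) := by
    funext x
    rw [sin_two_mul_nat_mul_eq_sin_mul_sum]
    ring
  rw [h]
  exact (continuous_finsetSum _ fun k _ ↦ by fun_prop).mul (continuous_mul_log.comp continuous_sin)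

theorem hasDerivAt_sin_two_nat_mul_mul_log_sin (n : ℕ) {x : ℝ} (hx : sin x ≠ 0) :
    HasDerivAt (fun x ↦ sin (2 * n * x) * log (sin x))
      (2 * n * (cos (2 * n * x) * log (sin x))
        + cos x * ∑ k ∈ range n, 2 * cos ((2 * k + 1) * x)) x := by
  have h := (((hasDerivAt_id' x).const_mul (2 * n : ℝ)).sin.fun_mul ((hasDerivAt_sin x).log hx))
  refine h.congr_deriv ?_
  rw [sin_two_mul_nat_mul_eq_sin_mul_sum]
  field_simp

theorem integral_cos_nat_mul_zero_pi {m : ℕ} (hm : m ≠ 0) : ∫ x in 0..π, cos (m * x) = 0 := by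
  simp [integral_comp_mul_left (fun x ↦ cos x) (Nat.cast_ne_zero.mpr hm), sin_nat_mul_pi]

theorem integral_two_mul_cos_mul_cos (k : ℕ) :
    ∫ x in 0..π, 2 * cos ((2 * k + 1) * x) * cos x = if k = 0 then π else 0 := by
  have h : ∀ x : ℝ, 2 * cos ((2 * k + 1) * x) * cos x
      = cos ((2 * (k + 1) : ℕ) * x) + cos ((2 * k : ℕ) * x) := by
    intro x
    push_cast
    rw [cos_add_cos]
    ring_nf
  simp_rw [h]
  rw [integral_add (by apply Continuous.intervalIntegrable; fun_prop)
    (by apply Continuous.intervalIntegrable; fun_prop), integral_cos_nat_mul_zero_pi (by omega)]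
  split_ifs with hk
  · simp [hk]
  · rw [integral_cos_nat_mul_zero_pi (by omega), add_zero]

theorem integral_cos_mul_sum_cos {n : ℕ} (hn : n ≠ 0) :
    ∫ x in 0..π, cos x * ∑ k ∈ range n, 2 * cos ((2 * k + 1) * x) = π := by
  simp_rw [mul_sum, mul_comm (cos _) (2 * cos _)]
  rw [integral_finsetSum fun k _ ↦ by apply Continuous.intervalIntegrable; fun_prop]
  simp_rw [integral_two_mul_cos_mul_cos]
  simp [Nat.pos_of_ne_zero hn]

theorem intervalIntegrable_mul_log_sin {g : ℝ → ℝ} (hg : Continuous g) (a b : ℝ) :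
    IntervalIntegrable (fun x ↦ g x * log (sin x)) MeasureTheory.volume a b :=
  intervalIntegrable_log_sin.continuousOn_mul hg.continuousOn

theorem integral_deriv_sin_two_nat_mul_mul_log_sin (n : ℕ) :
    ∫ x in 0..π, (2 * n * (cos (2 * n * x) * log (sin x))
      + cos x * ∑ k ∈ range n, 2 * cos ((2 * k + 1) * x)) = 0 := by
  have hderiv : ∀ x ∈ Set.Ioo 0 π, HasDerivAt (fun x ↦ sin (2 * n * x) * log (sin x))
      (2 * n * (cos (2 * n * x) * log (sin x))
        + cos x * ∑ k ∈ range n, 2 * cos ((2 * k + 1) * x)) x :=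
    fun x hx ↦ hasDerivAt_sin_two_nat_mul_mul_log_sin n (sin_pos_of_mem_Ioo hx).ne'
  have hint : IntervalIntegrable (fun x ↦ 2 * n * (cos (2 * n * x) * log (sin x))
      + cos x * ∑ k ∈ range n, 2 * cos ((2 * k + 1) * x)) MeasureTheory.volume 0 π :=
    ((intervalIntegrable_mul_log_sin (by fun_prop) _ _).const_mul _).add
      (Continuous.intervalIntegrable (by fun_prop) _ _)
  rw [integral_eq_sub_of_hasDerivAt_of_le pi_pos.le
    (continuous_sin_two_nat_mul_mul_log_sin n).continuousOn hderiv hint]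
  simp [show 2 * (n : ℝ) * π = (2 * n : ℕ) * π by push_cast; ring, sin_nat_mul_pi]

theorem integral_cos_mul_log_sin (j : ℕ) (hj : 1 ≤ j) :
    ∫ x in (0:ℝ)..Real.pi, Real.cos (2 * j * x) * Real.log (Real.sin x)
      = -Real.pi / (2 * j) := by
  have hj₀ : (j : ℝ) ≠ 0 := by positivity
  have h := integral_deriv_sin_two_nat_mul_mul_log_sin j
  rw [integral_add ((intervalIntegrable_mul_log_sin (by fun_prop) _ _).const_mul _)
      (Continuous.intervalIntegrable (by fun_prop) _ _),
    integral_const_mul, integral_cos_mul_sum_cos (by omega)] at h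
  field_simp
  linarith
end

section
/- With u₁(y) = (1/2)[-2 + y ln((1+y)/(1-y)) + ln(1-y²)], the constant C₁ := -(1/2)∫_{-1}^1 u₁(y) dy equals 3/2 - ln 2. -/
open Real intervalIntegral

/-! On `(-1, 1)` the integrand is `(1/2)(-2 + (1+y) log(1+y) + (1-y) log(1-y))`, so the shifts
`t = 1 ± y` reduce the integral to `∫₀² t log t = 2 log 2 - 1`, computed with the antiderivative
`t²/2 · log t - t²/4`, which is continuous at `0`. -/

theorem hasDerivAt_sq_div_two_mul_log_sub {x : ℝ} (hx : x ≠ 0) :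
    HasDerivAt (fun x => x ^ 2 / 2 * log x - x ^ 2 / 4) (x * log x) x := by
  have := (((hasDerivAt_pow 2 x).div_const 2).mul (hasDerivAt_log hx)).sub
    ((hasDerivAt_pow 2 x).div_const 4)
  exact this.congr_deriv (by field_simp; ring)

theorem integral_mul_log_from_zero {b : ℝ} (hb : 0 ≤ b) :
    ∫ x in 0..b, x * log x = b ^ 2 / 2 * log b - b ^ 2 / 4 := by
  have hF : Continuous fun x : ℝ => x ^ 2 / 2 * log x - x ^ 2 / 4 := by
    have : (fun x : ℝ => x ^ 2 / 2 * log x - x ^ 2 / 4) =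
        fun x => x / 2 * (x * log x) - x ^ 2 / 4 := by
      funext x; ring
    rw [this]
    fun_prop
  rw [integral_eq_sub_of_hasDerivAt_of_le hb hF.continuousOn
    (fun x hx => hasDerivAt_sq_div_two_mul_log_sub hx.1.ne')
    (continuous_mul_log.intervalIntegrable 0 b)]
  simp

theorem mul_log_div_add_log_one_sub_sq {y : ℝ} (hy : y ∈ Set.Ioo (-1) 1) :
    y * log ((1 + y) / (1 - y)) + log (1 - y ^ 2) =
      (1 + y) * log (1 + y) + (1 - y) * log (1 - y) := by
  have hp : 1 + y ≠ 0 := by linarith [hy.1]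
  have hm : 1 - y ≠ 0 := by linarith [hy.2]
  rw [log_div hp hm, show 1 - y ^ 2 = (1 + y) * (1 - y) by ring, log_mul hp hm]
  ring

theorem C1_value :
    -(1/2 : ℝ) * ∫ y in (-1:ℝ)..1,
        (1/2 : ℝ) * (-2 + y * Real.log ((1 + y) / (1 - y)) + Real.log (1 - y ^ 2))
      = 3/2 - Real.log 2 := by
  have h02 : ∫ x in (0:ℝ)..2, x * log x = 2 * log 2 - 1 := by
    rw [integral_mul_log_from_zero zero_le_two]; ring
  have hadd : ∫ y in (-1:ℝ)..1, (1 + y) * log (1 + y) = 2 * log 2 - 1 := by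
    rw [integral_comp_add_left (fun x => x * log x)]; norm_num [h02]
  have hsub : ∫ y in (-1:ℝ)..1, (1 - y) * log (1 - y) = 2 * log 2 - 1 := by
    rw [integral_comp_sub_left (fun x => x * log x)]; norm_num [h02]
  have hadd_int :
      IntervalIntegrable (fun y => (1 + y) * log (1 + y)) MeasureTheory.volume (-1) 1 :=
    (continuous_mul_log.comp (continuous_const.add continuous_id)).intervalIntegrable _ _
  have hsub_int :
      IntervalIntegrable (fun y => (1 - y) * log (1 - y)) MeasureTheory.volume (-1) 1 :=
    (continuous_mul_log.comp (continuous_const.sub continuous_id)).intervalIntegrable _ _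
  rw [integral_congr_Ioo_of_le (by norm_num) fun y hy => by
      rw [add_assoc, mul_log_div_add_log_one_sub_sq hy],
    integral_const_mul, integral_add intervalIntegrable_const (hadd_int.add hsub_int),
    integral_const, integral_add hadd_int hsub_int, hadd, hsub]
  norm_num
  ring
end

section
/- Let w(y) = y ln((1+y)/(1-y)) + ln(1-y²) on (-1,1), and let C₁ = 3/2 - ln 2. Then (1/(4π))∫_{-1}^1 w(y)² dy - (2/π)(1 - C₁)² = (21 - 2π²)/(18π); equivalently, C₂ := -2(1-C₁)²/π + (1/(4π))∫_{-1}^1 w(y)² dy = (21 - 2π²)/(18π). -/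
open Real intervalIntegral MeasureTheory Set Filter Topology


lemma basel_shift : HasSum (fun n : ℕ => (1:ℝ) / (n+1) ^ 2) (π ^ 2 / 6) := by
  have h := hasSum_zeta_two
  rw [← hasSum_nat_add_iff' 1] at h
  simpa using h

lemma hs_log (u : ℝ) (hu : u ∈ Ioo (0:ℝ) 1) :
    HasSum (fun n : ℕ => -(u^n/(n+1))) (Real.log (1-u)/u) := by
  have h1 : |u| < 1 := by rw [abs_lt]; constructor <;> nlinarith [hu.1, hu.2]
  have hu0 : u ≠ 0 := ne_of_gt hu.1
  have h2 := ((hasSum_pow_div_log_of_abs_lt_one h1).div_const u).neg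
  have hv : -(-Real.log (1-u) / u) = Real.log (1-u)/u := by ring
  rw [hv] at h2
  refine h2.congr_fun fun n => ?_
  field_simp [pow_succ]
  ring

lemma Ioo_val (n : ℕ) : ∫ u in Ioo (0:ℝ) 1, -(u^n/(n+1)) = -(1/(n+1)^2) := by
  rw [← MeasureTheory.integral_Ioc_eq_integral_Ioo,
    ← intervalIntegral.integral_of_le (by norm_num : (0:ℝ) ≤ 1)]
  have : ∫ u in (0:ℝ)..1, -(u^n/(n+1)) = -((∫ u in (0:ℝ)..1, u^n)/(n+1)) := by
    rw [← intervalIntegral.integral_div, ← intervalIntegral.integral_neg]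
  rw [this, integral_pow]
  push_cast
  field_simp
  ring

lemma L1 : ∫ u in (0:ℝ)..1, Real.log (1-u)/u = -(π^2/6) := by
  rw [intervalIntegral.integral_of_le (by norm_num), MeasureTheory.integral_Ioc_eq_integral_Ioo]
  have key : ∫ u in Ioo (0:ℝ) 1, Real.log (1-u)/u
      = ∫ u in Ioo (0:ℝ) 1, (∑' n : ℕ, -(u^n/(n+1))) := by
    apply setIntegral_congr_fun measurableSet_Ioo
    intro u hu
    exact ((hs_log u hu).tsum_eq).symm
  rw [key]
  have hInt : ∀ n : ℕ, Integrable (fun u : ℝ => -(u^n/(n+1)))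
      (volume.restrict (Ioo (0:ℝ) 1)) := by
    intro n
    exact (((continuous_pow n).div_const _).neg.integrableOn_Icc (a := (0:ℝ)) (b := 1)).mono_set
      Ioo_subset_Icc_self
  have hNorm : ∀ n : ℕ, (∫ u in Ioo (0:ℝ) 1, ‖-(u^n/(n+1))‖) = 1/(n+1)^2 := by
    intro n
    have : ∀ u ∈ Ioo (0:ℝ) 1, ‖-(u^n/(n+1))‖ = -(-(u^n/(n+1))) := by
      intro u hu
      rw [norm_neg, Real.norm_of_nonneg (div_nonneg (pow_nonneg hu.1.le n) (by positivity))]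
      ring
    rw [setIntegral_congr_fun measurableSet_Ioo this, MeasureTheory.integral_neg, Ioo_val]
    ring
  have hSum : Summable fun n : ℕ => ∫ u in Ioo (0:ℝ) 1, ‖-(u^n/(n+1))‖ := by
    apply Summable.congr basel_shift.summable
    intro n
    exact (hNorm n).symm
  rw [← MeasureTheory.integral_tsum_of_summable_integral_norm hInt hSum]
  have : ∀ n : ℕ, (∫ u in Ioo (0:ℝ) 1, -(u^n/(n+1))) = -(1/(n+1)^2) := Ioo_val
  rw [tsum_congr this, tsum_neg, basel_shift.tsum_eq]


noncomputable def wA (y : ℝ) : ℝ := (1+y)*Real.log (1+y)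
noncomputable def wB (y : ℝ) : ℝ := (1-y)*Real.log (1-y)
noncomputable def wl1 (y : ℝ) : ℝ := (Real.log (1-y) - Real.log 2) * (1+y)⁻¹
noncomputable def wl2 (y : ℝ) : ℝ := (Real.log (1+y) - Real.log 2) * (1-y)⁻¹
noncomputable def wOm (y : ℝ) : ℝ := (wA y + wB y)^2 - (4/3)*(wl1 y + wl2 y)

noncomputable def wE (y : ℝ) : ℝ :=
  4*(Real.log 2)^2*y
  + 2*(Real.log 2)*((1+y) * wA y)
  - 2*(Real.log 2)^2*(1+y)^2 - (Real.log 2)*(1+y)^2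
  - 2*(Real.log 2)*((1-y) * wB y)
  + 2*(Real.log 2)^2*(1-y)^2 + (Real.log 2)*(1-y)^2
  + (1/3)*((1+y) * (wA y)^2)
  - (2*(Real.log 2)/3+2/9)*((1+y)^2 * wA y)
  + ((Real.log 2)^2/3+2*(Real.log 2)/9+2/27)*(1+y)^3
  - (1/3)*((1-y) * (wB y)^2)
  + (2*(Real.log 2)/3+2/9)*((1-y)^2 * wB y)
  - ((Real.log 2)^2/3+2*(Real.log 2)/9+2/27)*(1-y)^3
  + (((2*y^2+y-13)/9)*wA y - (Real.log 2)*((y+1)*(2*y^2+y-13))/9 - (2*y^3/3+y^2/2-13*y)/9)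
  - (((2*y^2-y-13)/9)*wB y + (Real.log 2)*((y-1)*(2*y^2-y-13))/9 + (2*y^3/3-y^2/2-13*y)/9)

noncomputable def wV (y : ℝ) : ℝ :=
  (2*y-2*y^3/3)*((Real.log (1+y) - Real.log 2)*(Real.log (1-y) - Real.log 2))

noncomputable def wTh (y : ℝ) : ℝ := wE y + wV y

lemma contA : Continuous wA := continuous_mul_log.comp (by continuity)
lemma contB : Continuous wB := continuous_mul_log.comp (by continuity)

lemma contE : Continuous wE := by
  have hA := contA; have hB := contB
  unfold wE
  fun_prop

lemma wTh_one : wTh 1 = 4*(Real.log 2)^2 - 4*(Real.log 2) + 10/3 := by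
  unfold wTh wE wV wA wB
  norm_num [Real.log_zero]
  ring

lemma wTh_negone : wTh (-1) = -(4*(Real.log 2)^2 - 4*(Real.log 2) + 10/3) := by
  unfold wTh wE wV wA wB
  norm_num [Real.log_zero]
  ring

lemma hy1 (y : ℝ) : HasDerivAt (fun y : ℝ => 1+y) 1 y := by
  simpa using (hasDerivAt_id y).const_add 1

lemma hy2 (y : ℝ) : HasDerivAt (fun y : ℝ => 1-y) (-1) y := by
  simpa using (hasDerivAt_id y).const_sub 1

lemma hA' {y : ℝ} (h : (0:ℝ) < 1+y) : HasDerivAt wA (Real.log (1+y) + 1) y := by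
  have h1 := (Real.hasDerivAt_mul_log (ne_of_gt h)).comp y (hy1 y)
  have h2 : (Real.log (1+y) + 1) * 1 = Real.log (1+y) + 1 := by ring
  rw [h2] at h1
  exact h1

lemma hB' {y : ℝ} (h : (0:ℝ) < 1-y) : HasDerivAt wB (-(Real.log (1-y) + 1)) y := by
  have h1 := (Real.hasDerivAt_mul_log (ne_of_gt h)).comp y (hy2 y)
  have h2 : (Real.log (1-y) + 1) * (-1) = -(Real.log (1-y) + 1) := by ring
  rw [h2] at h1
  exact h1

lemma hla {y : ℝ} (h : (0:ℝ) < 1+y) : HasDerivAt (fun y : ℝ => Real.log (1+y)) (1+y)⁻¹ y := by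
  have h1 := (Real.hasDerivAt_log (ne_of_gt h)).comp y (hy1 y)
  have h2 : (1+y)⁻¹ * 1 = (1+y)⁻¹ := by ring
  rw [h2] at h1
  exact h1

lemma hlb {y : ℝ} (h : (0:ℝ) < 1-y) : HasDerivAt (fun y : ℝ => Real.log (1-y)) (-(1-y)⁻¹) y := by
  have h1 := (Real.hasDerivAt_log (ne_of_gt h)).comp y (hy2 y)
  have h2 : (1-y)⁻¹ * (-1) = -(1-y)⁻¹ := by ring
  rw [h2] at h1
  exact h1

lemma derivTh {y : ℝ} (hy : y ∈ Ioo (-1:ℝ) 1) : HasDerivAt wTh (wOm y) y := by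
  have ha : (0:ℝ) < 1+y := by linarith [hy.1]
  have hb : (0:ℝ) < 1-y := by linarith [hy.2]
  have ha' : (1:ℝ)+y ≠ 0 := ne_of_gt ha
  have hb' : (1:ℝ)-y ≠ 0 := ne_of_gt hb
  have HA := hA' ha
  have HB := hB' hb
  have HLA := hla ha
  have HLB := hlb hb
  have HT1 : HasDerivAt (fun y : ℝ => 4*(Real.log 2)^2*y) (4*(Real.log 2)^2) y := by
    have h := (hasDerivAt_id' (x := y)).const_mul (4*(Real.log 2)^2)
    exact h.congr_deriv (by ring)
  have HT2 : HasDerivAt (fun y : ℝ => 2*(Real.log 2)*((1+y) * wA y))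
      (2*(Real.log 2)*(wA y + (1+y)*(Real.log (1+y) + 1))) y := by
    have h := ((hy1 y).mul HA).const_mul (2*(Real.log 2))
    exact h.congr_deriv (by ring)
  have HT3 : HasDerivAt (fun y : ℝ => 2*(Real.log 2)^2*(1+y)^2) (4*(Real.log 2)^2*(1+y)) y := by
    have h := ((hy1 y).pow 2).const_mul (2*(Real.log 2)^2)
    exact h.congr_deriv (by ring)
  have HT4 : HasDerivAt (fun y : ℝ => (Real.log 2)*(1+y)^2) (2*(Real.log 2)*(1+y)) y := by
    have h := ((hy1 y).pow 2).const_mul (Real.log 2)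
    exact h.congr_deriv (by ring)
  have HT5 : HasDerivAt (fun y : ℝ => 2*(Real.log 2)*((1-y) * wB y))
      (2*(Real.log 2)*(-(wB y) - (1-y)*(Real.log (1-y) + 1))) y := by
    have h := ((hy2 y).mul HB).const_mul (2*(Real.log 2))
    exact h.congr_deriv (by ring)
  have HT6 : HasDerivAt (fun y : ℝ => 2*(Real.log 2)^2*(1-y)^2) (-(4*(Real.log 2)^2*(1-y))) y := by
    have h := ((hy2 y).pow 2).const_mul (2*(Real.log 2)^2)
    exact h.congr_deriv (by ring)
  have HT7 : HasDerivAt (fun y : ℝ => (Real.log 2)*(1-y)^2) (-(2*(Real.log 2)*(1-y))) y := by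
    have h := ((hy2 y).pow 2).const_mul (Real.log 2)
    exact h.congr_deriv (by ring)
  have HT8 : HasDerivAt (fun y : ℝ => (1/3)*((1+y) * (wA y)^2))
      ((1/3)*((wA y)^2 + (1+y)*(2*wA y*(Real.log (1+y) + 1)))) y := by
    have h := ((hy1 y).mul (HA.pow 2)).const_mul (1/3:ℝ)
    exact h.congr_deriv (by simp only [Pi.add_apply, Pi.sub_apply, Pi.mul_apply, Pi.pow_apply]; push_cast; ring)
  have HT9 : HasDerivAt (fun y : ℝ => (2*(Real.log 2)/3+2/9)*((1+y)^2 * wA y))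
      ((2*(Real.log 2)/3+2/9)*(2*(1+y)*wA y + (1+y)^2*(Real.log (1+y) + 1))) y := by
    have h := (((hy1 y).pow 2).mul HA).const_mul (2*(Real.log 2)/3+2/9)
    exact h.congr_deriv (by simp only [Pi.add_apply, Pi.sub_apply, Pi.mul_apply, Pi.pow_apply]; push_cast; ring)
  have HT10 : HasDerivAt (fun y : ℝ => ((Real.log 2)^2/3+2*(Real.log 2)/9+2/27)*(1+y)^3)
      (((Real.log 2)^2/3+2*(Real.log 2)/9+2/27)*(3*(1+y)^2)) y := by
    have h := ((hy1 y).pow 3).const_mul ((Real.log 2)^2/3+2*(Real.log 2)/9+2/27)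
    exact h.congr_deriv (by ring)
  have HT11 : HasDerivAt (fun y : ℝ => (1/3)*((1-y) * (wB y)^2))
      ((1/3)*(-((wB y)^2) - (1-y)*(2*wB y*(Real.log (1-y) + 1)))) y := by
    have h := ((hy2 y).mul (HB.pow 2)).const_mul (1/3:ℝ)
    exact h.congr_deriv (by simp only [Pi.add_apply, Pi.sub_apply, Pi.mul_apply, Pi.pow_apply]; push_cast; ring)
  have HT12 : HasDerivAt (fun y : ℝ => (2*(Real.log 2)/3+2/9)*((1-y)^2 * wB y))
      ((2*(Real.log 2)/3+2/9)*(-(2*(1-y)*wB y) - (1-y)^2*(Real.log (1-y) + 1))) y := by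
    have h := (((hy2 y).pow 2).mul HB).const_mul (2*(Real.log 2)/3+2/9)
    exact h.congr_deriv (by simp only [Pi.add_apply, Pi.sub_apply, Pi.mul_apply, Pi.pow_apply]; push_cast; ring)
  have HT13 : HasDerivAt (fun y : ℝ => ((Real.log 2)^2/3+2*(Real.log 2)/9+2/27)*(1-y)^3)
      (-(((Real.log 2)^2/3+2*(Real.log 2)/9+2/27)*(3*(1-y)^2))) y := by
    have h := ((hy2 y).pow 3).const_mul ((Real.log 2)^2/3+2*(Real.log 2)/9+2/27)
    exact h.congr_deriv (by ring)
  have hq1 : HasDerivAt (fun y : ℝ => (2*y^2+y-13)/9) ((4*y+1)/9) y := by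
    have h := ((((hasDerivAt_pow 2 y).const_mul 2).add (hasDerivAt_id' (x := y))).sub_const 13).div_const 9
    exact h.congr_deriv (by push_cast; ring)
  have hq2 : HasDerivAt (fun y : ℝ => (2*y^2-y-13)/9) ((4*y-1)/9) y := by
    have h := ((((hasDerivAt_pow 2 y).const_mul 2).sub (hasDerivAt_id' (x := y))).sub_const 13).div_const 9
    exact h.congr_deriv (by push_cast; ring)
  have HTP1 : HasDerivAt (fun y : ℝ => ((2*y^2+y-13)/9)*wA y)
      (((4*y+1)/9)*wA y + ((2*y^2+y-13)/9)*(Real.log (1+y) + 1)) y := hq1.mul HA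
  have HTP2 : HasDerivAt (fun y : ℝ => (Real.log 2)*((y+1)*(2*y^2+y-13))/9)
      ((Real.log 2)*((2*y^2+y-13) + (y+1)*(4*y+1))/9) y := by
    have h := ((((hasDerivAt_id' (x := y)).add_const 1).mul
      ((((hasDerivAt_pow 2 y).const_mul 2).add (hasDerivAt_id' (x := y))).sub_const 13)).const_mul
      (Real.log 2)).div_const 9
    exact h.congr_deriv (by simp only [Pi.add_apply, Pi.sub_apply, Pi.mul_apply, Pi.pow_apply]; push_cast; ring)
  have HTP3 : HasDerivAt (fun y : ℝ => (2*y^3/3+y^2/2-13*y)/9) ((2*y^2+y-13)/9) y := by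
    have h := (((((hasDerivAt_pow 3 y).const_mul 2).div_const 3).add
      ((hasDerivAt_pow 2 y).div_const 2)).sub ((hasDerivAt_id' (x := y)).const_mul 13)).div_const 9
    exact h.congr_deriv (by push_cast; ring)
  have HTQ1 : HasDerivAt (fun y : ℝ => ((2*y^2-y-13)/9)*wB y)
      (((4*y-1)/9)*wB y + ((2*y^2-y-13)/9)*(-(Real.log (1-y) + 1))) y := hq2.mul HB
  have HTQ2 : HasDerivAt (fun y : ℝ => (Real.log 2)*((y-1)*(2*y^2-y-13))/9)
      ((Real.log 2)*((2*y^2-y-13) + (y-1)*(4*y-1))/9) y := by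
    have h := ((((hasDerivAt_id' (x := y)).sub_const 1).mul
      ((((hasDerivAt_pow 2 y).const_mul 2).sub (hasDerivAt_id' (x := y))).sub_const 13)).const_mul
      (Real.log 2)).div_const 9
    exact h.congr_deriv (by simp only [Pi.add_apply, Pi.sub_apply, Pi.mul_apply, Pi.pow_apply]; push_cast; ring)
  have HTQ3 : HasDerivAt (fun y : ℝ => (2*y^3/3-y^2/2-13*y)/9) ((2*y^2-y-13)/9) y := by
    have h := (((((hasDerivAt_pow 3 y).const_mul 2).div_const 3).sub
      ((hasDerivAt_pow 2 y).div_const 2)).sub ((hasDerivAt_id' (x := y)).const_mul 13)).div_const 9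
    exact h.congr_deriv (by push_cast; ring)
  have hpoly : HasDerivAt (fun y : ℝ => 2*y-2*y^3/3) (2-2*y^2) y := by
    have h := ((hasDerivAt_id' (x := y)).const_mul 2).sub (((hasDerivAt_pow 3 y).const_mul 2).div_const 3)
    exact h.congr_deriv (by push_cast; ring)
  have HTV : HasDerivAt wV
      ((2-2*y^2)*((Real.log (1+y) - Real.log 2)*(Real.log (1-y) - Real.log 2))
        + (2*y-2*y^3/3)*((1+y)⁻¹*(Real.log (1-y) - Real.log 2)
            + (Real.log (1+y) - Real.log 2)*(-(1-y)⁻¹))) y := by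
    have h := hpoly.mul ((HLA.sub_const (Real.log 2)).mul (HLB.sub_const (Real.log 2)))
    exact h
  have HE : HasDerivAt wE
      (4*(Real.log 2)^2
        + 2*(Real.log 2)*(wA y + (1+y)*(Real.log (1+y) + 1))
        - 4*(Real.log 2)^2*(1+y) - 2*(Real.log 2)*(1+y)
        - 2*(Real.log 2)*(-(wB y) - (1-y)*(Real.log (1-y) + 1))
        + -(4*(Real.log 2)^2*(1-y)) + -(2*(Real.log 2)*(1-y))
        + (1/3)*((wA y)^2 + (1+y)*(2*wA y*(Real.log (1+y) + 1)))
        - (2*(Real.log 2)/3+2/9)*(2*(1+y)*wA y + (1+y)^2*(Real.log (1+y) + 1))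
        + ((Real.log 2)^2/3+2*(Real.log 2)/9+2/27)*(3*(1+y)^2)
        - (1/3)*(-((wB y)^2) - (1-y)*(2*wB y*(Real.log (1-y) + 1)))
        + (2*(Real.log 2)/3+2/9)*(-(2*(1-y)*wB y) - (1-y)^2*(Real.log (1-y) + 1))
        - (-(((Real.log 2)^2/3+2*(Real.log 2)/9+2/27)*(3*(1-y)^2)))
        + ((((4*y+1)/9)*wA y + ((2*y^2+y-13)/9)*(Real.log (1+y) + 1))
            - (Real.log 2)*((2*y^2+y-13) + (y+1)*(4*y+1))/9 - (2*y^2+y-13)/9)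
        - ((((4*y-1)/9)*wB y + ((2*y^2-y-13)/9)*(-(Real.log (1-y) + 1)))
            + (Real.log 2)*((2*y^2-y-13) + (y-1)*(4*y-1))/9 + (2*y^2-y-13)/9)) y := by
    unfold wE
    exact ((((((((((((((HT1.add HT2).sub HT3).sub HT4).sub HT5).add HT6).add HT7).add
      HT8).sub HT9).add HT10).sub HT11).add HT12).sub HT13).add
      ((HTP1.sub HTP2).sub HTP3)).sub ((HTQ1.add HTQ2).add HTQ3))
  have H := HE.add HTV
  have hgoal : wOm y = (4*(Real.log 2)^2
        + 2*(Real.log 2)*(wA y + (1+y)*(Real.log (1+y) + 1))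
        - 4*(Real.log 2)^2*(1+y) - 2*(Real.log 2)*(1+y)
        - 2*(Real.log 2)*(-(wB y) - (1-y)*(Real.log (1-y) + 1))
        + -(4*(Real.log 2)^2*(1-y)) + -(2*(Real.log 2)*(1-y))
        + (1/3)*((wA y)^2 + (1+y)*(2*wA y*(Real.log (1+y) + 1)))
        - (2*(Real.log 2)/3+2/9)*(2*(1+y)*wA y + (1+y)^2*(Real.log (1+y) + 1))
        + ((Real.log 2)^2/3+2*(Real.log 2)/9+2/27)*(3*(1+y)^2)
        - (1/3)*(-((wB y)^2) - (1-y)*(2*wB y*(Real.log (1-y) + 1)))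
        + (2*(Real.log 2)/3+2/9)*(-(2*(1-y)*wB y) - (1-y)^2*(Real.log (1-y) + 1))
        - (-(((Real.log 2)^2/3+2*(Real.log 2)/9+2/27)*(3*(1-y)^2)))
        + ((((4*y+1)/9)*wA y + ((2*y^2+y-13)/9)*(Real.log (1+y) + 1))
            - (Real.log 2)*((2*y^2+y-13) + (y+1)*(4*y+1))/9 - (2*y^2+y-13)/9)
        - ((((4*y-1)/9)*wB y + ((2*y^2-y-13)/9)*(-(Real.log (1-y) + 1)))
            + (Real.log 2)*((2*y^2-y-13) + (y-1)*(4*y-1))/9 + (2*y^2-y-13)/9))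
      + ((2-2*y^2)*((Real.log (1+y) - Real.log 2)*(Real.log (1-y) - Real.log 2))
        + (2*y-2*y^3/3)*((1+y)⁻¹*(Real.log (1-y) - Real.log 2)
            + (Real.log (1+y) - Real.log 2)*(-(1-y)⁻¹))) := by
    unfold wOm wA wB wl1 wl2
    field_simp
    ring
  rw [hgoal]
  exact H

lemma contV : ContinuousOn wV (Icc (-1:ℝ) 1) := by
  intro x hx
  rcases eq_or_lt_of_le hx.1 with h1 | h1
  · -- x = -1
    rw [← h1]
    rw [← continuousWithinAt_diff_self]
    have hV0 : wV (-1:ℝ) = 0 := by unfold wV; norm_num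
    unfold ContinuousWithinAt
    rw [hV0]
    have hb' : HasDerivAt (fun y : ℝ => Real.log (1-y)) (-(1-(-1:ℝ))⁻¹) (-1) := hlb (by norm_num)
    rw [hasDerivAt_iff_tendsto_slope] at hb'
    have hs : Tendsto (fun y : ℝ => (Real.log (1-y) - Real.log 2)/(y+1)) (𝓝[≠] (-1:ℝ))
        (𝓝 (-(1-(-1:ℝ))⁻¹)) := by
      refine hb'.congr fun z => ?_
      rw [slope_def_field]
      norm_num
    have hPc : Continuous (fun y : ℝ => (2*y-2*y^3/3)*(wA y - Real.log 2*(1+y))) := by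
      have h := contA; fun_prop
    have hP : Tendsto (fun y : ℝ => (2*y-2*y^3/3)*(wA y - Real.log 2*(1+y))) (𝓝 (-1:ℝ)) (𝓝 0) := by
      have h := hPc.tendsto (-1)
      have hval : (2*(-1:ℝ)-2*(-1:ℝ)^3/3)*(wA (-1) - Real.log 2*(1+(-1))) = 0 := by
        unfold wA; norm_num
      rwa [hval] at h
    have key := (hP.mono_left nhdsWithin_le_nhds).mul
      (hs.mono_left (nhdsWithin_mono _
        (show Icc (-1:ℝ) 1 \ {(-1:ℝ)} ⊆ {(-1:ℝ)}ᶜ from fun z hz => hz.2)))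
    rw [zero_mul] at key
    refine key.congr' ?_
    filter_upwards [self_mem_nhdsWithin] with z hz
    have hz1 : z + 1 ≠ 0 := by
      have : z ≠ -1 := by simpa using hz.2
      intro h; exact this (by linarith)
    unfold wV wA
    field_simp
    ring
  rcases eq_or_lt_of_le hx.2 with h2 | h2
  · -- x = 1
    subst h2
    rw [← continuousWithinAt_diff_self]
    have hV0 : wV (1:ℝ) = 0 := by unfold wV; norm_num
    unfold ContinuousWithinAt
    rw [hV0]
    have hb' : HasDerivAt (fun y : ℝ => Real.log (1+y)) ((1+(1:ℝ))⁻¹) 1 := hla (by norm_num)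
    rw [hasDerivAt_iff_tendsto_slope] at hb'
    have hs : Tendsto (fun y : ℝ => (Real.log (1+y) - Real.log 2)/(y-1)) (𝓝[≠] (1:ℝ))
        (𝓝 ((1+(1:ℝ))⁻¹)) := by
      refine hb'.congr fun z => ?_
      rw [slope_def_field]
      norm_num
    have hPc : Continuous (fun y : ℝ => (2*y-2*y^3/3)*(Real.log 2*(1-y) - wB y)) := by
      have h := contB; fun_prop
    have hP : Tendsto (fun y : ℝ => (2*y-2*y^3/3)*(Real.log 2*(1-y) - wB y)) (𝓝 (1:ℝ)) (𝓝 0) := by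
      have h := hPc.tendsto 1
      have hval : (2*(1:ℝ)-2*(1:ℝ)^3/3)*(Real.log 2*(1-(1:ℝ)) - wB 1) = 0 := by
        unfold wB; norm_num
      rwa [hval] at h
    have key := (hP.mono_left nhdsWithin_le_nhds).mul
      (hs.mono_left (nhdsWithin_mono _
        (show Icc (-1:ℝ) 1 \ {(1:ℝ)} ⊆ {(1:ℝ)}ᶜ from fun z hz => hz.2)))
    rw [zero_mul] at key
    refine key.congr' ?_
    filter_upwards [self_mem_nhdsWithin] with z hz
    have hz1 : z - 1 ≠ 0 := by
      have : z ≠ 1 := by simpa using hz.2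
      intro h; exact this (by linarith)
    unfold wV wB
    field_simp
    ring
  · -- interior
    apply ContinuousAt.continuousWithinAt
    have c1 : ContinuousAt (fun y : ℝ => Real.log (1+y)) x :=
      ContinuousAt.comp (Real.continuousAt_log (by linarith)) (by fun_prop)
    have c2 : ContinuousAt (fun y : ℝ => Real.log (1-y)) x :=
      ContinuousAt.comp (Real.continuousAt_log (by linarith)) (by fun_prop)
    exact ((by fun_prop : ContinuousAt (fun y : ℝ => 2*y-2*y^3/3) x)).mul
      ((c1.sub continuousAt_const).mul (c2.sub continuousAt_const))

lemma contTh : ContinuousOn wTh (Icc (-1:ℝ) 1) := contE.continuousOn.add contV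

lemma hIntlm : IntervalIntegrable (fun y : ℝ => Real.log (1-y) - Real.log 2) volume (-1) 1 := by
  have h : IntervalIntegrable (fun y : ℝ => Real.log 2 - Real.log (1-y)) volume (-1) 1 := by
    apply intervalIntegrable_deriv_of_nonneg (g := fun y => wB y + (1+Real.log 2)*y)
    · have h := contB
      apply Continuous.continuousOn
      fun_prop
    · intro x hx
      simp only [min_eq_left, max_eq_right, (by norm_num : (-1:ℝ) ≤ 1)] at hx
      have hb : (0:ℝ) < 1-x := by
        rcases hx with ⟨hx1, hx2⟩
        norm_num at hx1 hx2 ⊢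
        linarith
      have hd := (hB' hb).add ((hasDerivAt_id' (x := x)).const_mul (1+Real.log 2))
      exact hd.congr_deriv (by ring)
    · intro x hx
      simp only [min_eq_left, max_eq_right, (by norm_num : (-1:ℝ) ≤ 1)] at hx
      have hb : (0:ℝ) < 1-x := by
        rcases hx with ⟨hx1, hx2⟩
        norm_num at hx1 hx2 ⊢
        linarith
      have : Real.log (1-x) ≤ Real.log 2 := Real.log_le_log hb (by rcases hx with ⟨hx1,_⟩; norm_num at hx1; linarith)
      linarith
  have h2 := h.neg
  have : (-fun y : ℝ => Real.log 2 - Real.log (1-y)) = fun y : ℝ => Real.log (1-y) - Real.log 2 := by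
    funext z; simp
  rwa [this] at h2

lemma hIntlp : IntervalIntegrable (fun y : ℝ => Real.log (1+y) - Real.log 2) volume (-1) 1 := by
  have h : IntervalIntegrable (fun y : ℝ => Real.log 2 - Real.log (1+y)) volume (-1) 1 := by
    apply intervalIntegrable_deriv_of_nonneg (g := fun y => (1+Real.log 2)*y - wA y)
    · have h := contA
      apply Continuous.continuousOn
      fun_prop
    · intro x hx
      simp only [min_eq_left, max_eq_right, (by norm_num : (-1:ℝ) ≤ 1)] at hx
      have ha : (0:ℝ) < 1+x := by
        rcases hx with ⟨hx1, hx2⟩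
        norm_num at hx1 hx2 ⊢
        linarith
      have hd := ((hasDerivAt_id' (x := x)).const_mul (1+Real.log 2)).sub (hA' ha)
      exact hd.congr_deriv (by ring)
    · intro x hx
      simp only [min_eq_left, max_eq_right, (by norm_num : (-1:ℝ) ≤ 1)] at hx
      have ha : (0:ℝ) < 1+x := by
        rcases hx with ⟨hx1, hx2⟩
        norm_num at hx1 hx2 ⊢
        linarith
      have : Real.log (1+x) ≤ Real.log 2 := Real.log_le_log ha (by rcases hx with ⟨_,hx2⟩; norm_num at hx2; linarith)
      linarith
  have h2 := h.neg
  have : (-fun y : ℝ => Real.log 2 - Real.log (1+y)) = fun y : ℝ => Real.log (1+y) - Real.log 2 := by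
    funext z; simp
  rwa [this] at h2

lemma measl1 : Measurable wl1 := by
  unfold wl1
  exact ((Real.measurable_log.comp (measurable_const.sub measurable_id)).sub
    measurable_const).mul ((measurable_const.add measurable_id).inv)

lemma measl2 : Measurable wl2 := by
  unfold wl2
  exact ((Real.measurable_log.comp (measurable_const.add measurable_id)).sub
    measurable_const).mul ((measurable_const.sub measurable_id).inv)

lemma hIntl1 : IntervalIntegrable wl1 volume (-1) 1 := by
  have part1 : IntervalIntegrable wl1 volume (-1) 0 := by
    rw [intervalIntegrable_iff, uIoc_of_le (by norm_num : (-1:ℝ) ≤ 0)]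
    apply Integrable.mono' (integrable_const (1:ℝ)) measl1.aestronglyMeasurable
    rw [ae_restrict_iff' measurableSet_Ioc]
    filter_upwards with y hy
    obtain ⟨hy1, hy2⟩ := hy
    have ha : (0:ℝ) < 1+y := by linarith
    have hb : (1:ℝ) ≤ 1-y := by linarith
    have h0 : Real.log (1-y) - Real.log 2 ≤ 0 := by
      have := Real.log_le_log (by linarith : (0:ℝ) < 1-y) (by linarith : (1:ℝ)-y ≤ 2)
      linarith
    have hbd : Real.log 2 - Real.log (1-y) ≤ 1+y := by
      have e1 : Real.log 2 - Real.log (1-y) = Real.log (2/(1-y)) :=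
        (Real.log_div (by norm_num) (by linarith)).symm
      have e2 := Real.log_le_sub_one_of_pos (show (0:ℝ) < 2/(1-y) by positivity)
      have e3 : 2/(1-y) - 1 ≤ 1+y := by
        rw [div_sub_one (by linarith : (1:ℝ)-y ≠ 0)]
        have e4 : (2 - (1-y))/(1-y) = (1+y)/(1-y) := by ring_nf
        rw [e4]
        exact div_le_self (by linarith) hb
      linarith [e1 ▸ e2]
    have : ‖wl1 y‖ = (Real.log 2 - Real.log (1-y)) * (1+y)⁻¹ := by
      unfold wl1
      rw [norm_mul, Real.norm_of_nonpos h0, Real.norm_of_nonneg (by positivity)]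
      ring
    rw [this]
    calc (Real.log 2 - Real.log (1-y)) * (1+y)⁻¹ ≤ (1+y) * (1+y)⁻¹ := by
          apply mul_le_mul_of_nonneg_right hbd (by positivity)
      _ = 1 := mul_inv_cancel₀ (ne_of_gt ha)
  have part2 : IntervalIntegrable wl1 volume 0 1 := by
    have h := (hIntlm.mono_set (by rw [uIcc_of_le (by norm_num : (0:ℝ) ≤ 1),
      uIcc_of_le (by norm_num : (-1:ℝ) ≤ 1)]; exact Icc_subset_Icc (by norm_num) le_rfl)).mul_continuousOn
      (g := fun y => (1+y)⁻¹) ?_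
    · exact h
    · rw [uIcc_of_le (by norm_num : (0:ℝ) ≤ 1)]
      apply ContinuousOn.inv₀
      · fun_prop
      · intro x hx; obtain ⟨h1, _⟩ := hx; intro h; linarith [h]
  exact part1.trans part2

lemma hIntl2 : IntervalIntegrable wl2 volume (-1) 1 := by
  have part1 : IntervalIntegrable wl2 volume (-1) 0 := by
    have h := (hIntlp.mono_set (by rw [uIcc_of_le (by norm_num : (-1:ℝ) ≤ 0),
      uIcc_of_le (by norm_num : (-1:ℝ) ≤ 1)]; exact Icc_subset_Icc le_rfl (by norm_num))).mul_continuousOn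
      (g := fun y => (1-y)⁻¹) ?_
    · exact h
    · rw [uIcc_of_le (by norm_num : (-1:ℝ) ≤ 0)]
      apply ContinuousOn.inv₀
      · fun_prop
      · intro x hx; obtain ⟨_, h2⟩ := hx; intro h; linarith [h]
  have part2 : IntervalIntegrable wl2 volume 0 1 := by
    rw [intervalIntegrable_iff, uIoc_of_le (by norm_num : (0:ℝ) ≤ 1)]
    apply Integrable.mono' (integrable_const (1:ℝ)) measl2.aestronglyMeasurable
    rw [ae_restrict_iff' measurableSet_Ioc]
    filter_upwards with y hy
    obtain ⟨hy1, hy2⟩ := hy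
    rcases eq_or_lt_of_le hy2 with hEnd | hy2'
    · subst hEnd
      unfold wl2
      norm_num
    · have hb : (0:ℝ) < 1-y := by linarith
      have ha : (1:ℝ) ≤ 1+y := by linarith
      have h0 : Real.log (1+y) - Real.log 2 ≤ 0 := by
        have := Real.log_le_log (by linarith : (0:ℝ) < 1+y) (by linarith : (1:ℝ)+y ≤ 2)
        linarith
      have hbd : Real.log 2 - Real.log (1+y) ≤ 1-y := by
        have e1 : Real.log 2 - Real.log (1+y) = Real.log (2/(1+y)) :=
          (Real.log_div (by norm_num) (by linarith)).symm
        have e2 := Real.log_le_sub_one_of_pos (show (0:ℝ) < 2/(1+y) by positivity)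
        have e3 : 2/(1+y) - 1 ≤ 1-y := by
          rw [div_sub_one (by linarith : (1:ℝ)+y ≠ 0)]
          have e4 : (2 - (1+y))/(1+y) = (1-y)/(1+y) := by ring_nf
          rw [e4]
          exact div_le_self (by linarith) ha
        linarith [e1 ▸ e2]
      have : ‖wl2 y‖ = (Real.log 2 - Real.log (1+y)) * (1-y)⁻¹ := by
        unfold wl2
        rw [norm_mul, Real.norm_of_nonpos h0, Real.norm_of_nonneg (by positivity)]
        ring
      rw [this]
      calc (Real.log 2 - Real.log (1+y)) * (1-y)⁻¹ ≤ (1-y) * (1-y)⁻¹ := by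
            apply mul_le_mul_of_nonneg_right hbd (by positivity)
        _ = 1 := mul_inv_cancel₀ (ne_of_gt hb)
  exact part1.trans part2

lemma hIntOm : IntervalIntegrable wOm volume (-1) 1 := by
  have hc : Continuous (fun y => (wA y + wB y)^2) := by
    have h1 := contA; have h2 := contB; fun_prop
  have h := (hc.intervalIntegrable (-1) 1).sub ((hIntl1.add hIntl2).const_mul (4/3))
  have he : (fun y => (wA y + wB y)^2 - (4/3)*(wl1 y + wl2 y)) = wOm := by
    funext z; unfold wOm; ring
  rwa [he] at h

lemma intOmVal : ∫ y in (-1:ℝ)..1, wOm y = 8*(Real.log 2)^2 - 8*(Real.log 2) + 20/3 := by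
  rw [integral_eq_sub_of_hasDeriv_right_of_le (by norm_num) contTh
    (fun x hx => (derivTh hx).hasDerivWithinAt) hIntOm, wTh_one, wTh_negone]
  ring

lemma intl1Val : ∫ y in (-1:ℝ)..1, wl1 y = -(π^2/6) := by
  have hae : ∀ᵐ x : ℝ, x ∈ Set.uIoc (-1:ℝ) 1 →
      wl1 x = (1/2) * (Real.log (1 - (1/2*x + 1/2)) / (1/2*x + 1/2)) := by
    have hone : ∀ᵐ x : ℝ, x ≠ 1 := by
      refine MeasureTheory.ae_iff.mpr ?_
      have : {a : ℝ | ¬a ≠ 1} = {1} := by ext a; simp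
      rw [this]
      exact measure_singleton 1
    filter_upwards [hone] with x hx hmem
    rw [uIoc_of_le (by norm_num : (-1:ℝ) ≤ 1)] at hmem
    obtain ⟨h1, h2⟩ := hmem
    have h2' : x < 1 := lt_of_le_of_ne h2 hx
    have ha : (0:ℝ) < 1+x := by linarith
    have hb : (0:ℝ) < 1-x := by linarith
    have e1 : 1 - (1/2*x + 1/2) = (1-x)/2 := by ring
    rw [e1, Real.log_div (by linarith) (by norm_num)]
    unfold wl1
    rw [show (1:ℝ)/2*x + 1/2 = (1+x)/2 by ring, div_div_eq_mul_div, div_eq_mul_inv]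
    ring
  rw [integral_congr_ae hae, intervalIntegral.integral_const_mul]
  have hcomp := integral_comp_mul_add (a := (-1:ℝ)) (b := 1)
    (f := fun u => Real.log (1-u)/u) (c := (1/2:ℝ)) (by norm_num) (1/2)
  norm_num at hcomp
  rw [hcomp, L1]
  ring

lemma intl2Val : ∫ y in (-1:ℝ)..1, wl2 y = -(π^2/6) := by
  have he : wl2 = fun y => wl1 (-y) := by
    funext x
    unfold wl1 wl2
    rw [show (1:ℝ) - (-x) = 1 + x by ring, show (1:ℝ) + (-x) = 1 - x by ring]
  rw [he]
  have h := integral_comp_neg (a := (-1:ℝ)) (b := 1) (f := wl1)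
  simp only [neg_neg] at h
  rw [h, intl1Val]

theorem C2_value :
    -2 * (1 - (3/2 - Real.log 2)) ^ 2 / Real.pi
      + (1 / (4 * Real.pi)) * ∫ y in (-1:ℝ)..1,
          (y * Real.log ((1 + y) / (1 - y)) + Real.log (1 - y ^ 2)) ^ 2
      = (21 - 2 * Real.pi ^ 2) / (18 * Real.pi) := by
  have hstep1 : (∫ y in (-1:ℝ)..1,
      (y * Real.log ((1 + y) / (1 - y)) + Real.log (1 - y ^ 2)) ^ 2)
      = ∫ y in (-1:ℝ)..1, (wOm y + (4/3)*(wl1 y + wl2 y)) := by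
    apply intervalIntegral.integral_congr_ae
    have hone : ∀ᵐ x : ℝ, x ≠ 1 := by
      refine MeasureTheory.ae_iff.mpr ?_
      have : {a : ℝ | ¬a ≠ 1} = {1} := by ext a; simp
      rw [this]
      exact measure_singleton 1
    filter_upwards [hone] with x hx hmem
    rw [uIoc_of_le (by norm_num : (-1:ℝ) ≤ 1)] at hmem
    obtain ⟨h1, h2⟩ := hmem
    have h2' : x < 1 := lt_of_le_of_ne h2 hx
    have ha : (0:ℝ) < 1+x := by linarith
    have hb : (0:ℝ) < 1-x := by linarith
    rw [Real.log_div (ne_of_gt ha) (ne_of_gt hb),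
      show (1:ℝ) - x^2 = (1+x)*(1-x) by ring,
      Real.log_mul (ne_of_gt ha) (ne_of_gt hb)]
    unfold wOm wA wB wl1 wl2
    ring
  rw [hstep1, intervalIntegral.integral_add hIntOm ((hIntl1.add hIntl2).const_mul (4/3)),
    intervalIntegral.integral_const_mul, intervalIntegral.integral_add hIntl1 hIntl2,
    intOmVal, intl1Val, intl2Val]
  have hπ : Real.pi ≠ 0 := Real.pi_ne_zero
  field_simp
  ring
end
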